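/- arXiv:2202.01441 — 5 statements merged into one kernel-verified Lean document; each statement's English description precedes it below -/
import Mathlib

section
/- Let γ̃ be a rescaled curve shortening flow in ℝ³ (as specified in the context) whose image lies in the plane {ξ ∈ ℝ³ : ξ₃ = 0}, and assume ψ(τ,x) ≠ ±π/2 for all (τ,x), i.e. γ̃ is never parallel to γ̃'. Then the quantity ∫₀^{2π} (|γ̃'|/|γ̃|) cos ψ dx is constant in τ: its derivative with respect to τ is identically zero. -/
open Real MeasureTheory intervalIntegral
open scoped RealInnerProductSpace

noncomputable section

abbrev E3 : Type := EuclideanSpace ℝ (Fin 3)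

def cross (u v : E3) : E3 :=
  (WithLp.equiv 2 (Fin 3 → ℝ)).symm
    ![u 1 * v 2 - u 2 * v 1, u 2 * v 0 - u 0 * v 2, u 0 * v 1 - u 1 * v 0]

def proj (v u : E3) : E3 := (⟪u, v⟫ / ‖v‖ ^ 2) • v

/-- `∂ₓ γ̃` -/
def pd1 (γ : ℝ → ℝ → E3) (τ x : ℝ) : E3 := deriv (γ τ) x
/-- `∂ₓ² γ̃` -/
def pd2 (γ : ℝ → ℝ → E3) (τ x : ℝ) : E3 := deriv (deriv (γ τ)) x
/-- `∂_τ γ̃` -/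
def pdt (γ : ℝ → ℝ → E3) (τ x : ℝ) : E3 := deriv (fun s => γ s x) τ
/-- curvature `κ = |γ̃″×γ̃′|/|γ̃′|³` -/
def curv (γ : ℝ → ℝ → E3) (τ x : ℝ) : ℝ := ‖cross (pd2 γ τ x) (pd1 γ τ x)‖ / ‖pd1 γ τ x‖ ^ 3
/-- unit normal `ν = γ̃′×(γ̃″×γ̃′)/(|γ̃′||γ̃″×γ̃′|)` -/
def nrml (γ : ℝ → ℝ → E3) (τ x : ℝ) : E3 :=
  (‖pd1 γ τ x‖ * ‖cross (pd2 γ τ x) (pd1 γ τ x)‖)⁻¹ •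
    cross (pd1 γ τ x) (cross (pd2 γ τ x) (pd1 γ τ x))
/-- the angle `ψ = arcsin(⟨γ̃,γ̃′⟩/(|γ̃||γ̃′|))` -/
def angle (γ : ℝ → ℝ → E3) (τ x : ℝ) : ℝ :=
  arcsin (⟪γ τ x, pd1 γ τ x⟫ / (‖γ τ x‖ * ‖pd1 γ τ x‖))

/-- γ̃ is smooth, 2π-periodic in x, and satisfies the rescaled curve shortening flow
`∂_τγ̃ = (1/2)γ̃ + γ̃′×(γ̃″×γ̃′)/|γ̃′|⁴`. -/
def IsRCSF (γ : ℝ → ℝ → E3) : Prop :=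
  ContDiff ℝ (⊤ : ℕ∞) (Function.uncurry γ) ∧ (∀ τ, Function.Periodic (γ τ) (2 * π)) ∧
  ∀ τ x, pdt γ τ x = (1/2 : ℝ) • γ τ x +
    (‖pd1 γ τ x‖ ^ 4)⁻¹ • cross (pd1 γ τ x) (cross (pd2 γ τ x) (pd1 γ τ x))

namespace S3Aux

/-- τ-partial derivative of a scalar function on `ℝ × ℝ`. -/
def pt (u : ℝ × ℝ → ℝ) (p : ℝ × ℝ) : ℝ := fderiv ℝ u p (1,0)
/-- x-partial derivative of a scalar function on `ℝ × ℝ`. -/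
def px (u : ℝ × ℝ → ℝ) (p : ℝ × ℝ) : ℝ := fderiv ℝ u p (0,1)

variable {u : ℝ × ℝ → ℝ}

lemma hasDerivAt_px (hu : ContDiff ℝ (⊤ : ℕ∞) u) (τ x : ℝ) :
    HasDerivAt (fun y => u (τ, y)) (px u (τ, x)) x := by
  have h1 : HasFDerivAt u (fderiv ℝ u (τ,x)) (τ,x) :=
    (hu.differentiable (by simp) (τ,x)).hasFDerivAt
  have h2 : HasDerivAt (fun y => ((τ, y) : ℝ × ℝ)) ((0,1) : ℝ × ℝ) x :=
    (hasDerivAt_const x τ).prodMk (hasDerivAt_id x)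
  exact h1.comp_hasDerivAt x h2

lemma hasDerivAt_pt (hu : ContDiff ℝ (⊤ : ℕ∞) u) (τ x : ℝ) :
    HasDerivAt (fun s => u (s, x)) (pt u (τ, x)) τ := by
  have h1 : HasFDerivAt u (fderiv ℝ u (τ,x)) (τ,x) :=
    (hu.differentiable (by simp) (τ,x)).hasFDerivAt
  have h2 : HasDerivAt (fun s => ((s, x) : ℝ × ℝ)) ((1,0) : ℝ × ℝ) τ :=
    (hasDerivAt_id τ).prodMk (hasDerivAt_const τ x)
  exact h1.comp_hasDerivAt τ h2

lemma contDiff_pt (hu : ContDiff ℝ (⊤ : ℕ∞) u) : ContDiff ℝ (⊤ : ℕ∞) (pt u) :=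
  (hu.fderiv_right (by simp)).clm_apply contDiff_const

lemma contDiff_px (hu : ContDiff ℝ (⊤ : ℕ∞) u) : ContDiff ℝ (⊤ : ℕ∞) (px u) :=
  (hu.fderiv_right (by simp)).clm_apply contDiff_const

lemma symm_ptpx (hu : ContDiff ℝ (⊤ : ℕ∞) u) (p : ℝ × ℝ) : px (pt u) p = pt (px u) p := by
  have hd : ∀ y, HasFDerivAt u (fderiv ℝ u y) y := fun y =>
    (hu.differentiable (by simp) y).hasFDerivAt
  have h2 : HasFDerivAt (fderiv ℝ u) (fderiv ℝ (fderiv ℝ u) p) p :=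
    ((hu.fderiv_right (m := (⊤ : ℕ∞)) (by simp)).differentiable (by simp) p).hasFDerivAt
  have hsymm := second_derivative_symmetric hd h2 (0,1) (1,0)
  have e1 : px (pt u) p = fderiv ℝ (fderiv ℝ u) p (0,1) (1,0) := by
    unfold px pt
    rw [fderiv_clm_apply ((hu.fderiv_right (m := (⊤ : ℕ∞)) (by simp)).differentiable (by simp) p)
      (differentiable_const _ _)]
    simp
  have e2 : pt (px u) p = fderiv ℝ (fderiv ℝ u) p (1,0) (0,1) := by
    unfold px pt
    rw [fderiv_clm_apply ((hu.fderiv_right (m := (⊤ : ℕ∞)) (by simp)).differentiable (by simp) p)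
      (differentiable_const _ _)]
    simp
  rw [e1, e2, hsymm]

lemma px_periodic (hu : ContDiff ℝ (⊤ : ℕ∞) u) {T : ℝ} (hper : ∀ s y, u (s, y + T) = u (s, y))
    (s y : ℝ) : px u (s, y + T) = px u (s, y) := by
  have h1 := hasDerivAt_px hu s (y + T)
  have h2 : HasDerivAt (fun y' => u (s, y' + T)) (px u (s, y + T) * 1) y :=
    by have := h1.comp y ((hasDerivAt_id y).add_const T); exact this
  have h2' : HasDerivAt (fun y' => u (s, y')) (px u (s, y + T) * 1) y := by
    simpa only [hper] using h2
  simpa using h2'.unique (hasDerivAt_px hu s y)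

lemma pt_periodic (hu : ContDiff ℝ (⊤ : ℕ∞) u) {T : ℝ} (hper : ∀ s y, u (s, y + T) = u (s, y))
    (s y : ℝ) : pt u (s, y + T) = pt u (s, y) := by
  have h1 := hasDerivAt_pt hu s (y + T)
  have h2 : HasDerivAt (fun s' => u (s', y)) (pt u (s, y + T)) s := by
    simpa only [hper] using h1
  exact h2.unique (hasDerivAt_pt hu s y)

end S3Aux

namespace S3Aux

variable (γ : ℝ → ℝ → E3)

def ca : ℝ × ℝ → ℝ := fun p => γ p.1 p.2 0
def cb : ℝ × ℝ → ℝ := fun p => γ p.1 p.2 1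
def RR : ℝ × ℝ → ℝ := fun p => ca γ p ^ 2 + cb γ p ^ 2
def WW : ℝ × ℝ → ℝ := fun p => ca γ p * px (cb γ) p - cb γ p * px (ca γ) p
def GG : ℝ × ℝ → ℝ := fun p => WW γ p / RR γ p
def HH : ℝ × ℝ → ℝ := fun p => (ca γ p * pt (cb γ) p - cb γ p * pt (ca γ) p) / RR γ p
def GT : ℝ × ℝ → ℝ := fun p =>
  ((pt (ca γ) p * px (cb γ) p + ca γ p * pt (px (cb γ)) p
      - (pt (cb γ) p * px (ca γ) p + cb γ p * pt (px (ca γ)) p)) * RR γ p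
    - WW γ p * (2 * ca γ p * pt (ca γ) p + 2 * cb γ p * pt (cb γ) p)) / RR γ p ^ 2

variable {γ}

lemma contDiff_coord (hsm : ContDiff ℝ (⊤ : ℕ∞) (Function.uncurry γ)) (i : Fin 3) :
    ContDiff ℝ (⊤ : ℕ∞) (fun p : ℝ × ℝ => γ p.1 p.2 i) :=
  (EuclideanSpace.proj (𝕜 := ℝ) i).contDiff.comp hsm

lemma contDiff_ca (hsm : ContDiff ℝ (⊤ : ℕ∞) (Function.uncurry γ)) : ContDiff ℝ (⊤ : ℕ∞) (ca γ) :=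
  contDiff_coord hsm 0

lemma contDiff_cb (hsm : ContDiff ℝ (⊤ : ℕ∞) (Function.uncurry γ)) : ContDiff ℝ (⊤ : ℕ∞) (cb γ) :=
  contDiff_coord hsm 1

lemma pd1_coord (hsm : ContDiff ℝ (⊤ : ℕ∞) (Function.uncurry γ)) (s y : ℝ) (i : Fin 3) :
    pd1 γ s y i = px (fun p : ℝ × ℝ => γ p.1 p.2 i) (s, y) := by
  have hdiff : DifferentiableAt ℝ (γ s) y := by
    have h : γ s = (Function.uncurry γ) ∘ (fun y' => (s, y')) := rfl
    rw [h]
    exact ((hsm.differentiable (by simp)).comp (by fun_prop)).differentiableAt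
  have h1 : HasDerivAt (γ s) (pd1 γ s y) y := hdiff.hasDerivAt
  have h2 : HasDerivAt (fun y' => γ s y' i) (pd1 γ s y i) y :=
    (EuclideanSpace.proj (𝕜 := ℝ) i).hasFDerivAt.comp_hasDerivAt y h1
  exact h2.unique (hasDerivAt_px (contDiff_coord hsm i) s y)

lemma pd1_two (hsm : ContDiff ℝ (⊤ : ℕ∞) (Function.uncurry γ))
    (hplane : ∀ τ x, γ τ x 2 = 0) (s y : ℝ) : pd1 γ s y 2 = 0 := by
  rw [pd1_coord hsm s y 2]
  have h : (fun p : ℝ × ℝ => γ p.1 p.2 2) = fun _ => (0 : ℝ) :=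
    funext fun p => hplane p.1 p.2
  rw [px, h, fderiv_fun_const]
  simp

lemma norm_sq_gamma (hplane : ∀ τ x, γ τ x 2 = 0) (s y : ℝ) :
    ‖γ s y‖ ^ 2 = RR γ (s, y) := by
  have h := EuclideanSpace.norm_eq (γ s y)
  rw [h, Real.sq_sqrt (by positivity)]
  simp [RR, ca, cb, Fin.sum_univ_three, hplane s y, sq_abs]

lemma norm_sq_pd1 (hsm : ContDiff ℝ (⊤ : ℕ∞) (Function.uncurry γ))
    (hplane : ∀ τ x, γ τ x 2 = 0) (s y : ℝ) :
    ‖pd1 γ s y‖ ^ 2 = px (ca γ) (s, y) ^ 2 + px (cb γ) (s, y) ^ 2 := by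
  have h := EuclideanSpace.norm_eq (pd1 γ s y)
  rw [h, Real.sq_sqrt (by positivity)]
  rw [Fin.sum_univ_three, pd1_two hsm hplane s y]
  rw [pd1_coord hsm s y 0, pd1_coord hsm s y 1]
  simp only [Real.norm_eq_abs, sq_abs, norm_zero, ne_eq, OfNat.ofNat_ne_zero,
    not_false_eq_true, zero_pow, add_zero]
  rfl

lemma inner_gamma_pd1 (hsm : ContDiff ℝ (⊤ : ℕ∞) (Function.uncurry γ))
    (hplane : ∀ τ x, γ τ x 2 = 0) (s y : ℝ) :
    ⟪γ s y, pd1 γ s y⟫ = ca γ (s, y) * px (ca γ) (s, y) + cb γ (s, y) * px (cb γ) (s, y) := by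
  rw [show ⟪γ s y, pd1 γ s y⟫ = ∑ i : Fin 3, γ s y i * pd1 γ s y i from by
    simp [PiLp.inner_apply, RCLike.inner_apply, conj_trivial, mul_comm]]
  rw [Fin.sum_univ_three, hplane s y, pd1_coord hsm s y 0, pd1_coord hsm s y 1]
  simp only [zero_mul, add_zero]
  rfl

lemma lagrange (a b ax bx : ℝ) :
    (a ^ 2 + b ^ 2) * (ax ^ 2 + bx ^ 2) - (a * ax + b * bx) ^ 2 = (a * bx - b * ax) ^ 2 := by
  ring

lemma RR_pos (h0 : ∀ τ x, γ τ x ≠ 0) (hplane : ∀ τ x, γ τ x 2 = 0) (p : ℝ × ℝ) :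
    0 < RR γ p := by
  rw [← norm_sq_gamma hplane p.1 p.2]
  exact pow_pos (norm_pos_iff.mpr (h0 p.1 p.2)) 2

lemma integrand_eq (hsm : ContDiff ℝ (⊤ : ℕ∞) (Function.uncurry γ))
    (h0 : ∀ τ x, γ τ x ≠ 0) (h1 : ∀ τ x, pd1 γ τ x ≠ 0)
    (hplane : ∀ τ x, γ τ x 2 = 0) (s y : ℝ) :
    ‖pd1 γ s y‖ / ‖γ s y‖ * Real.cos (angle γ s y) = |WW γ (s, y)| / RR γ (s, y) := by
  set r := ‖γ s y‖ with hrdef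
  set q := ‖pd1 γ s y‖ with hqdef
  have hr : 0 < r := norm_pos_iff.mpr (h0 s y)
  have hq : 0 < q := norm_pos_iff.mpr (h1 s y)
  set a := ca γ (s, y)
  set b := cb γ (s, y)
  set ax := px (ca γ) (s, y)
  set bx := px (cb γ) (s, y)
  have hr2 : r ^ 2 = a ^ 2 + b ^ 2 := norm_sq_gamma hplane s y
  have hq2 : q ^ 2 = ax ^ 2 + bx ^ 2 := norm_sq_pd1 hsm hplane s y
  have hip : ⟪γ s y, pd1 γ s y⟫ = a * ax + b * bx := inner_gamma_pd1 hsm hplane s y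
  rw [angle, Real.cos_arcsin, hip, ← hrdef, ← hqdef]
  have hrq : r * q ≠ 0 := by positivity
  have key : 1 - ((a * ax + b * bx) / (r * q)) ^ 2 = ((a * bx - b * ax) / (r * q)) ^ 2 := by
    rw [div_pow, div_pow, sub_eq_iff_eq_add, ← add_div, eq_comm,
      div_eq_one_iff_eq (by positivity)]
    rw [mul_pow, hr2, hq2]
    ring
  rw [key, Real.sqrt_sq_eq_abs, abs_div, abs_of_pos (mul_pos hr hq)]
  have hW : WW γ (s, y) = a * bx - b * ax := rfl
  have hRR : RR γ (s, y) = a ^ 2 + b ^ 2 := rfl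
  rw [hW, hRR, ← hr2]
  field_simp

lemma WW_ne (hsm : ContDiff ℝ (⊤ : ℕ∞) (Function.uncurry γ))
    (h0 : ∀ τ x, γ τ x ≠ 0) (h1 : ∀ τ x, pd1 γ τ x ≠ 0)
    (hplane : ∀ τ x, γ τ x 2 = 0)
    (hψ : ∀ τ x, angle γ τ x ≠ π / 2 ∧ angle γ τ x ≠ -(π / 2)) (p : ℝ × ℝ) :
    WW γ p ≠ 0 := by
  obtain ⟨s, y⟩ := p
  intro hW0
  set r := ‖γ s y‖ with hrdef
  set q := ‖pd1 γ s y‖ with hqdef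
  have hr : 0 < r := norm_pos_iff.mpr (h0 s y)
  have hq : 0 < q := norm_pos_iff.mpr (h1 s y)
  set a := ca γ (s, y)
  set b := cb γ (s, y)
  set ax := px (ca γ) (s, y)
  set bx := px (cb γ) (s, y)
  have hr2 : r ^ 2 = a ^ 2 + b ^ 2 := norm_sq_gamma hplane s y
  have hq2 : q ^ 2 = ax ^ 2 + bx ^ 2 := norm_sq_pd1 hsm hplane s y
  have hip : ⟪γ s y, pd1 γ s y⟫ = a * ax + b * bx := inner_gamma_pd1 hsm hplane s y
  have hW : WW γ (s, y) = a * bx - b * ax := rfl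
  have hsq : (a * ax + b * bx) ^ 2 = (r * q) ^ 2 := by
    rw [mul_pow, hr2, hq2]
    have : a * bx - b * ax = 0 := by rw [← hW]; exact hW0
    nlinarith [this]
  have habs : a * ax + b * bx = r * q ∨ a * ax + b * bx = -(r * q) := sq_eq_sq_iff_eq_or_eq_neg.mp hsq
  have hrq : r * q ≠ 0 := by positivity
  rcases habs with h | h
  · exact (hψ s y).1 (by rw [angle, hip, h, div_self hrq, Real.arcsin_one])
  · exact (hψ s y).2 (by
      rw [angle, hip, h, neg_div, div_self hrq, Real.arcsin_neg, Real.arcsin_one])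

lemma hasDerivAt_GG_tau (hsm : ContDiff ℝ (⊤ : ℕ∞) (Function.uncurry γ))
    (hRne : ∀ p, RR γ p ≠ 0) (s y : ℝ) :
    HasDerivAt (fun s' => GG γ (s', y)) (GT γ (s, y)) s := by
  have hca := contDiff_ca hsm
  have hcb := contDiff_cb hsm
  have ha := hasDerivAt_pt hca s y
  have hb := hasDerivAt_pt hcb s y
  have hax := hasDerivAt_pt (contDiff_px hca) s y
  have hbx := hasDerivAt_pt (contDiff_px hcb) s y
  have num := (ha.mul hbx).sub (hb.mul hax)
  have den := (ha.pow 2).add (hb.pow 2)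
  have hR : RR γ (s, y) ≠ 0 := hRne (s, y)
  unfold RR at hR
  have q := num.div den hR
  refine q.congr_deriv ?_
  unfold GT WW RR
  simp only [Pi.add_apply, Pi.mul_apply, Pi.sub_apply, Pi.pow_apply]
  push_cast
  ring

lemma hasDerivAt_HH_x (hsm : ContDiff ℝ (⊤ : ℕ∞) (Function.uncurry γ))
    (hRne : ∀ p, RR γ p ≠ 0) (s y : ℝ) :
    HasDerivAt (fun y' => HH γ (s, y')) (GT γ (s, y)) y := by
  have hca := contDiff_ca hsm
  have hcb := contDiff_cb hsm
  have ha := hasDerivAt_px hca s y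
  have hb := hasDerivAt_px hcb s y
  have hta := hasDerivAt_px (contDiff_pt hca) s y
  have htb := hasDerivAt_px (contDiff_pt hcb) s y
  have num := (ha.mul htb).sub (hb.mul hta)
  have den := (ha.pow 2).add (hb.pow 2)
  have hR : RR γ (s, y) ≠ 0 := hRne (s, y)
  unfold RR at hR
  have q := num.div den hR
  refine q.congr_deriv ?_
  rw [show px (pt (ca γ)) (s, y) = pt (px (ca γ)) (s, y) from symm_ptpx hca (s, y),
      show px (pt (cb γ)) (s, y) = pt (px (cb γ)) (s, y) from symm_ptpx hcb (s, y)]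
  unfold GT WW RR
  simp only [Pi.add_apply, Pi.mul_apply, Pi.sub_apply, Pi.pow_apply]
  push_cast
  ring

lemma continuous_GG (hsm : ContDiff ℝ (⊤ : ℕ∞) (Function.uncurry γ))
    (hRne : ∀ p, RR γ p ≠ 0) : Continuous (GG γ) := by
  have c1 := (contDiff_ca hsm).continuous
  have c2 := (contDiff_cb hsm).continuous
  have c3 := (contDiff_px (contDiff_ca hsm)).continuous
  have c4 := (contDiff_px (contDiff_cb hsm)).continuous
  unfold GG WW RR
  unfold RR at hRne
  exact Continuous.div (by fun_prop) (by fun_prop) hRne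

lemma continuous_GT (hsm : ContDiff ℝ (⊤ : ℕ∞) (Function.uncurry γ))
    (hRne : ∀ p, RR γ p ≠ 0) : Continuous (GT γ) := by
  have c1 := (contDiff_ca hsm).continuous
  have c2 := (contDiff_cb hsm).continuous
  have c3 := (contDiff_px (contDiff_ca hsm)).continuous
  have c4 := (contDiff_px (contDiff_cb hsm)).continuous
  have c5 := (contDiff_pt (contDiff_ca hsm)).continuous
  have c6 := (contDiff_pt (contDiff_cb hsm)).continuous
  have c7 := (contDiff_pt (contDiff_px (contDiff_ca hsm))).continuous
  have c8 := (contDiff_pt (contDiff_px (contDiff_cb hsm))).continuous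
  unfold GT WW RR
  unfold RR at hRne
  exact Continuous.div (by fun_prop) (by fun_prop) (fun p => pow_ne_zero 2 (hRne p))

lemma continuous_WW (hsm : ContDiff ℝ (⊤ : ℕ∞) (Function.uncurry γ)) : Continuous (WW γ) := by
  have c1 := (contDiff_ca hsm).continuous
  have c2 := (contDiff_cb hsm).continuous
  have c3 := (contDiff_px (contDiff_ca hsm)).continuous
  have c4 := (contDiff_px (contDiff_cb hsm)).continuous
  unfold WW
  fun_prop

lemma HH_periodic (hsm : ContDiff ℝ (⊤ : ℕ∞) (Function.uncurry γ))
    (hper : ∀ s, Function.Periodic (γ s) (2 * π)) (s y : ℝ) :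
    HH γ (s, y + 2 * π) = HH γ (s, y) := by
  have hpca : ∀ s y, ca γ (s, y + 2 * π) = ca γ (s, y) :=
    fun s y => congrArg (fun v => v 0) (hper s y)
  have hpcb : ∀ s y, cb γ (s, y + 2 * π) = cb γ (s, y) :=
    fun s y => congrArg (fun v => v 1) (hper s y)
  unfold HH RR
  rw [hpca, hpcb, pt_periodic (contDiff_ca hsm) hpca, pt_periodic (contDiff_cb hsm) hpcb]

end S3Aux

theorem stmt3 (γ : ℝ → ℝ → E3) (hflow : IsRCSF γ)
    (h0 : ∀ τ x, γ τ x ≠ 0) (h1 : ∀ τ x, pd1 γ τ x ≠ 0)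
    (hplane : ∀ τ x, γ τ x 2 = 0)
    (hψ : ∀ τ x, angle γ τ x ≠ π / 2 ∧ angle γ τ x ≠ -(π / 2)) :
    ∀ τ : ℝ,
      HasDerivAt
        (fun s => ∫ x in (0:ℝ)..(2 * π), ‖pd1 γ s x‖ / ‖γ s x‖ * Real.cos (angle γ s x))
        0 τ := by
  obtain ⟨hsm, hper, -⟩ := hflow
  intro τ₀
  have hRpos : ∀ p, 0 < S3Aux.RR γ p := S3Aux.RR_pos h0 hplane
  have hRne : ∀ p, S3Aux.RR γ p ≠ 0 := fun p => (hRpos p).ne'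
  have hInt : ∀ s y, ‖pd1 γ s y‖ / ‖γ s y‖ * Real.cos (angle γ s y)
      = |S3Aux.WW γ (s, y)| / S3Aux.RR γ (s, y) :=
    fun s y => S3Aux.integrand_eq hsm h0 h1 hplane s y
  have hWne : ∀ p, S3Aux.WW γ p ≠ 0 := S3Aux.WW_ne hsm h0 h1 hplane hψ
  have hWc : Continuous (S3Aux.WW γ) := S3Aux.continuous_WW hsm
  -- sign dichotomy
  have hsign : (∀ p, 0 < S3Aux.WW γ p) ∨ (∀ p, S3Aux.WW γ p < 0) := by
    by_contra hcon
    push_neg at hcon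
    obtain ⟨⟨p₀, hp₀⟩, p₁, hp₁⟩ := hcon
    obtain ⟨p, hp⟩ := intermediate_value_univ₂ hWc continuous_const hp₀ hp₁
    exact hWne p hp
  -- derivative of the GG-integral
  have hGcont : Continuous (S3Aux.GG γ) := S3Aux.continuous_GG hsm hRne
  have hGTcont : Continuous (S3Aux.GT γ) := S3Aux.continuous_GT hsm hRne
  have hπ : (0 : ℝ) ≤ 2 * π := by positivity
  set K : Set (ℝ × ℝ) := Metric.closedBall τ₀ 1 ×ˢ Set.Icc 0 (2 * π) with hK
  have hKc : IsCompact K := (isCompact_closedBall τ₀ 1).prod isCompact_Icc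
  obtain ⟨C, hC⟩ := hKc.exists_bound_of_continuousOn hGTcont.continuousOn
  have main := intervalIntegral.hasDerivAt_integral_of_dominated_loc_of_deriv_le
      (F := fun s y => S3Aux.GG γ (s, y)) (F' := fun s y => S3Aux.GT γ (s, y))
      (x₀ := τ₀) (a := 0) (b := 2 * π) (bound := fun _ => C) (μ := volume)
      (Metric.ball_mem_nhds τ₀ one_pos)
      (Filter.Eventually.of_forall fun s =>
        (hGcont.comp (continuous_const.prodMk continuous_id)).aestronglyMeasurable)
      ((hGcont.comp (continuous_const.prodMk continuous_id)).intervalIntegrable 0 (2 * π))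
      ((hGTcont.comp (continuous_const.prodMk continuous_id)).aestronglyMeasurable)
      (Filter.Eventually.of_forall fun y hy s hs => by
        have hyK : y ∈ Set.Icc (0 : ℝ) (2 * π) := by
          rw [Set.uIoc_of_le hπ] at hy
          exact ⟨hy.1.le, hy.2⟩
        have hsK : s ∈ Metric.closedBall τ₀ 1 := Metric.ball_subset_closedBall hs
        exact hC (s, y) ⟨hsK, hyK⟩)
      (intervalIntegrable_const)
      (Filter.Eventually.of_forall fun y hy s hs => S3Aux.hasDerivAt_GG_tau hsm hRne s y)
  have hzero : (∫ y in (0:ℝ)..(2 * π), S3Aux.GT γ (τ₀, y)) = 0 := by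
    have heq := intervalIntegral.integral_eq_sub_of_hasDerivAt
      (f := fun y => S3Aux.HH γ (τ₀, y)) (f' := fun y => S3Aux.GT γ (τ₀, y))
      (a := 0) (b := 2 * π)
      (fun y _ => S3Aux.hasDerivAt_HH_x hsm hRne τ₀ y)
      ((hGTcont.comp (continuous_const.prodMk continuous_id)).intervalIntegrable 0 (2 * π))
    have h2 : S3Aux.HH γ (τ₀, 2 * π) = S3Aux.HH γ (τ₀, 0) := by
      rw [show (2 * π : ℝ) = 0 + 2 * π by ring]
      exact S3Aux.HH_periodic hsm hper τ₀ 0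
    rw [heq]
    show S3Aux.HH γ (τ₀, 2 * π) - S3Aux.HH γ (τ₀, 0) = 0
    rw [h2, sub_self]
  rw [hzero] at main
  have Phi : HasDerivAt (fun s => ∫ y in (0:ℝ)..(2 * π), S3Aux.GG γ (s, y)) 0 τ₀ := main.2
  rcases hsign with hpos | hneg
  · have hfeq : (fun s => ∫ x in (0:ℝ)..(2 * π),
        ‖pd1 γ s x‖ / ‖γ s x‖ * Real.cos (angle γ s x))
        = fun s => ∫ y in (0:ℝ)..(2 * π), S3Aux.GG γ (s, y) := by
      funext s
      apply intervalIntegral.integral_congr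
      intro y _
      show ‖pd1 γ s y‖ / ‖γ s y‖ * Real.cos (angle γ s y) = S3Aux.GG γ (s, y)
      rw [hInt s y, abs_of_pos (hpos (s, y))]
      rfl
    rw [hfeq]
    exact Phi
  · have hfeq : (fun s => ∫ x in (0:ℝ)..(2 * π),
        ‖pd1 γ s x‖ / ‖γ s x‖ * Real.cos (angle γ s x))
        = fun s => ∫ y in (0:ℝ)..(2 * π), -S3Aux.GG γ (s, y) := by
      funext s
      apply intervalIntegral.integral_congr
      intro y _
      show ‖pd1 γ s y‖ / ‖γ s y‖ * Real.cos (angle γ s y) = -S3Aux.GG γ (s, y)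
      rw [hInt s y, abs_of_neg (hneg (s, y))]
      show -S3Aux.WW γ (s, y) / S3Aux.RR γ (s, y) = -(S3Aux.WW γ (s, y) / S3Aux.RR γ (s, y))
      ring
    have heqn : (fun s => ∫ y in (0:ℝ)..(2 * π), -S3Aux.GG γ (s, y))
        = fun s => -∫ y in (0:ℝ)..(2 * π), S3Aux.GG γ (s, y) :=
      funext fun s => intervalIntegral.integral_neg
    rw [hfeq, heqn]
    exact Phi.neg.congr_deriv neg_zero
end
end

section
/- Let a : (0,∞) → ℝ and f : (−π/2,π/2) → ℝ be smooth, and for linearly independent ξ, η ∈ ℝ³ set F(ξ,η) = a(|ξ|) |η| f(ψ(ξ,η)) with ψ(ξ,η) = arcsin(⟨ξ,η⟩/(|ξ||η|)). Then for all such ξ, η: (D²_η F(ξ,η)) ξ = a(|ξ|) |η|^{−1} ( f(ψ) + f''(ψ) ) ( ξ − (⟨ξ,η⟩/|η|²) η ). In particular, if f'' + f = g, then (D²_η F − ρ |η|^{−1} D²_η|η|) ξ = 0 for ρ(ξ,η) = a(|ξ|)|η| g(ψ). -/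
open Real MeasureTheory intervalIntegral Topology
open scoped RealInnerProductSpace

noncomputable section

/-- the angle `ψ(ξ,η) = arcsin(⟨ξ,η⟩/(|ξ||η|))` -/
def psi (ξ η : E3) : ℝ := Real.arcsin (⟪ξ, η⟫ / (‖ξ‖ * ‖η‖))

/-- `F(ξ,η) = a(|ξ|)|η|f(ψ(ξ,η))`, as a function of `η` for fixed `ξ` -/
def Fof (a f : ℝ → ℝ) (ξ η : E3) : ℝ := a ‖ξ‖ * ‖η‖ * f (psi ξ η)

/-- the Hessian bilinear form of `φ` at `η`, applied to the pair of vectors `(u, w)`;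
the Hessian of `φ` at `η` as a linear map sends `u` to the vector `v` such that
`⟪v, w⟫ = hessApply φ η u w` for all `w`. -/
def hessApply (φ : E3 → ℝ) (η u w : E3) : ℝ := fderiv ℝ (fun y => fderiv ℝ φ y u) η w


lemma my_norm_hasFDerivAt {y : E3} (hy : y ≠ 0) :
    HasFDerivAt (fun x : E3 => ‖x‖) (‖y‖⁻¹ • innerSL ℝ y) y := by
  have h1 : HasFDerivAt (fun x : E3 => ‖x‖ ^ 2) (2 • innerSL ℝ y) y :=
    (hasStrictFDerivAt_norm_sq y).hasFDerivAt
  have hy' : (0:ℝ) < ‖y‖ := norm_pos_iff.2 hy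
  have h2 : HasDerivAt Real.sqrt (1 / (2 * Real.sqrt (‖y‖ ^ 2))) (‖y‖ ^ 2) :=
    Real.hasDerivAt_sqrt (by positivity)
  have h3 := h2.comp_hasFDerivAt y h1
  have e : (Real.sqrt ∘ fun x : E3 => ‖x‖ ^ 2) = fun x : E3 => ‖x‖ :=
    funext fun x => Real.sqrt_sq (norm_nonneg x)
  rw [e] at h3
  refine h3.congr_fderiv (Eq.symm ?_)
  rw [Real.sqrt_sq (norm_nonneg y)]
  ext w
  simp only [ContinuousLinearMap.smul_apply, ContinuousLinearMap.coe_smul', Pi.smul_apply,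
    smul_eq_mul]
  push_cast
  field_simp
  ring

lemma my_p_hasFDerivAt {ξ y : E3} (hξ : ξ ≠ 0) (hy : y ≠ 0) :
    HasFDerivAt (fun x : E3 => ⟪ξ, x⟫ / (‖ξ‖ * ‖x‖))
      ((‖ξ‖ * ‖y‖)⁻¹ • innerSL ℝ ξ - (⟪ξ, y⟫ / (‖ξ‖ * ‖y‖ ^ 3)) • innerSL ℝ y) y := by
  have hX : (0:ℝ) < ‖ξ‖ := norm_pos_iff.2 hξ
  have hn : (0:ℝ) < ‖y‖ := norm_pos_iff.2 hy
  have hs : HasFDerivAt (fun x : E3 => ⟪ξ, x⟫) (innerSL ℝ ξ) y := (innerSL ℝ ξ).hasFDerivAt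
  have hden : HasFDerivAt (fun x : E3 => ‖ξ‖ * ‖x‖) (‖ξ‖ • (‖y‖⁻¹ • innerSL ℝ y)) y :=
    (my_norm_hasFDerivAt hy).const_mul ‖ξ‖
  have hinv : HasDerivAt (fun t : ℝ => t⁻¹) (-((‖ξ‖ * ‖y‖) ^ 2)⁻¹) (‖ξ‖ * ‖y‖) :=
    hasDerivAt_inv (by positivity)
  have hcomp := hinv.comp_hasFDerivAt y hden
  have hmul := hs.mul hcomp
  have e : (fun x : E3 => ⟪ξ, x⟫ / (‖ξ‖ * ‖x‖)) =
      (fun x : E3 => ⟪ξ, x⟫) * ((fun t : ℝ => t⁻¹) ∘ fun x : E3 => ‖ξ‖ * ‖x‖) := by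
    funext x; simp [div_eq_mul_inv, Function.comp]
  rw [← e] at hmul
  refine hmul.congr_fderiv (Eq.symm ?_)
  ext w
  simp only [ContinuousLinearMap.coe_sub', Pi.sub_apply, ContinuousLinearMap.smul_apply,
    ContinuousLinearMap.coe_smul', Pi.smul_apply, ContinuousLinearMap.add_apply,
    Function.comp, smul_eq_mul]
  field_simp
  ring

lemma my_psi_facts {ξ y : E3} (hξ : ξ ≠ 0) (hlt : |⟪ξ, y⟫| < ‖ξ‖ * ‖y‖) :
    y ≠ 0 ∧ Real.sin (psi ξ y) = ⟪ξ, y⟫ / (‖ξ‖ * ‖y‖) ∧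
      Real.cos (psi ξ y) ^ 2 = 1 - (⟪ξ, y⟫ / (‖ξ‖ * ‖y‖)) ^ 2 ∧
      0 < Real.cos (psi ξ y) ∧ psi ξ y ∈ Set.Ioo (-(π / 2)) (π / 2) := by
  have hX : (0:ℝ) < ‖ξ‖ := norm_pos_iff.2 hξ
  have hn : (0:ℝ) < ‖y‖ := by
    rcases eq_or_ne y 0 with rfl | h
    · simp at hlt
    · exact norm_pos_iff.2 h
  have hp : |⟪ξ, y⟫ / (‖ξ‖ * ‖y‖)| < 1 := by
    rw [abs_div, abs_of_pos (show (0:ℝ) < ‖ξ‖ * ‖y‖ by positivity), div_lt_one (by positivity)]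
    exact hlt
  have hp1 : -1 < ⟪ξ, y⟫ / (‖ξ‖ * ‖y‖) := (abs_lt.1 hp).1
  have hp2 : ⟪ξ, y⟫ / (‖ξ‖ * ‖y‖) < 1 := (abs_lt.1 hp).2
  refine ⟨fun h => by simp [h] at hn, Real.sin_arcsin hp1.le hp2.le, ?_, ?_, ?_⟩
  · rw [psi, Real.cos_arcsin]
    exact Real.sq_sqrt (by nlinarith)
  · rw [psi, Real.cos_arcsin]
    apply Real.sqrt_pos.2
    nlinarith
  · exact ⟨Real.neg_pi_div_two_lt_arcsin.2 hp1, Real.arcsin_lt_pi_div_two.2 hp2⟩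

lemma my_psi_hasFDerivAt {ξ y : E3} (hξ : ξ ≠ 0) (hlt : |⟪ξ, y⟫| < ‖ξ‖ * ‖y‖) :
    HasFDerivAt (psi ξ)
      ((Real.cos (psi ξ y))⁻¹ •
        ((‖ξ‖ * ‖y‖)⁻¹ • innerSL ℝ ξ - (⟪ξ, y⟫ / (‖ξ‖ * ‖y‖ ^ 3)) • innerSL ℝ y)) y := by
  obtain ⟨hy, -, hcos2, hcos, -⟩ := my_psi_facts hξ hlt
  have hX : (0:ℝ) < ‖ξ‖ := norm_pos_iff.2 hξ
  have hn : (0:ℝ) < ‖y‖ := norm_pos_iff.2 hy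
  have hp : |⟪ξ, y⟫ / (‖ξ‖ * ‖y‖)| < 1 := by
    rw [abs_div, abs_of_pos (show (0:ℝ) < ‖ξ‖ * ‖y‖ by positivity), div_lt_one (by positivity)]
    exact hlt
  have harc : HasDerivAt Real.arcsin (1 / Real.sqrt (1 - (⟪ξ, y⟫ / (‖ξ‖ * ‖y‖)) ^ 2))
      (⟪ξ, y⟫ / (‖ξ‖ * ‖y‖)) :=
    Real.hasDerivAt_arcsin (by nlinarith [abs_lt.1 hp]) (ne_of_lt (abs_lt.1 hp).2)
  have h := harc.comp_hasFDerivAt y (my_p_hasFDerivAt hξ hy)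
  have e : (Real.arcsin ∘ fun x : E3 => ⟪ξ, x⟫ / (‖ξ‖ * ‖x‖)) = psi ξ := rfl
  rw [e] at h
  refine h.congr_fderiv (congrArg (· • _) (Eq.symm ?_))
  rw [one_div, psi, Real.cos_arcsin]



lemma keyA (a f : ℝ → ℝ) (hf : ContDiffOn ℝ (⊤ : ℕ∞) f (Set.Ioo (-(π / 2)) (π / 2)))
    (ξ : E3) (hξ : ξ ≠ 0) {y : E3} (hlt : |⟪ξ, y⟫| < ‖ξ‖ * ‖y‖) :
    fderiv ℝ (Fof a f ξ) y ξ =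
      a ‖ξ‖ * ‖ξ‖ *
        (f (psi ξ y) * Real.sin (psi ξ y) + deriv f (psi ξ y) * Real.cos (psi ξ y)) := by
  obtain ⟨hy, hsin, hcos2, hcos, hmem⟩ := my_psi_facts hξ hlt
  have hX : (0:ℝ) < ‖ξ‖ := norm_pos_iff.2 hξ
  have hn : (0:ℝ) < ‖y‖ := norm_pos_iff.2 hy
  have hdf : HasDerivAt f (deriv f (psi ξ y)) (psi ξ y) :=
    ((hf.differentiableOn (by simp)).differentiableAt
      (Ioo_mem_nhds hmem.1 hmem.2)).hasDerivAt
  have hcompf := hdf.comp_hasFDerivAt y (my_psi_hasFDerivAt hξ hlt)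
  have hmul := (my_norm_hasFDerivAt hy).mul hcompf
  have hc := hmul.const_mul (a ‖ξ‖)
  have eF : Fof a f ξ = fun x => a ‖ξ‖ * ((fun x : E3 => ‖x‖) * (f ∘ psi ξ) : E3 → ℝ) x :=
    funext fun x => by simp [Fof, mul_assoc, Function.comp]
  rw [eF, hc.fderiv]
  simp only [ContinuousLinearMap.smul_apply, ContinuousLinearMap.add_apply,
    ContinuousLinearMap.coe_smul', Pi.smul_apply, ContinuousLinearMap.coe_sub', Pi.sub_apply,
    innerSL_apply_apply, smul_eq_mul, real_inner_self_eq_norm_sq, Function.comp_apply]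
  rw [show ⟪y, ξ⟫ = ⟪ξ, y⟫ from real_inner_comm _ _, hsin]
  have hkey : (Real.cos (psi ξ y))⁻¹ *
      ((‖ξ‖ * ‖y‖)⁻¹ * ‖ξ‖ ^ 2 - ⟪ξ, y⟫ / (‖ξ‖ * ‖y‖ ^ 3) * ⟪ξ, y⟫) =
      ‖ξ‖ * Real.cos (psi ξ y) / ‖y‖ := by
    have h1 : (‖ξ‖ * ‖y‖)⁻¹ * ‖ξ‖ ^ 2 - ⟪ξ, y⟫ / (‖ξ‖ * ‖y‖ ^ 3) * ⟪ξ, y⟫ =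
        ‖ξ‖ * Real.cos (psi ξ y) ^ 2 / ‖y‖ := by
      rw [hcos2]; field_simp
    rw [h1]; field_simp
  rw [hkey]
  field_simp
  ring


theorem stmt9 (a f : ℝ → ℝ) (ha : ContDiffOn ℝ (⊤ : ℕ∞) a (Set.Ioi 0))
    (hf : ContDiffOn ℝ (⊤ : ℕ∞) f (Set.Ioo (-(π / 2)) (π / 2)))
    (ξ η : E3) (hli : LinearIndependent ℝ ![ξ, η]) :
    (∀ w : E3,
      hessApply (Fof a f ξ) η ξ w =
        ⟪(a ‖ξ‖ * ‖η‖⁻¹ * (f (psi ξ η) + deriv (deriv f) (psi ξ η))) •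
            (ξ - (⟪ξ, η⟫ / ‖η‖ ^ 2) • η), w⟫) ∧
    ∀ g : ℝ → ℝ, (∀ t, deriv (deriv f) t + f t = g t) →
      ∀ w : E3,
        hessApply (Fof a f ξ) η ξ w -
          (a ‖ξ‖ * ‖η‖ * g (psi ξ η)) * ‖η‖⁻¹ * hessApply (fun y => ‖y‖) η ξ w = 0 := by
  -- basic consequences of linear independence
  obtain ⟨hη0, hnr⟩ := linearIndependent_fin2.1 hli
  rw [show (![ξ, η] 1) = η from rfl] at hη0
  have hnr' : ∀ r : ℝ, r • η ≠ ξ := fun r => by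
    have := hnr r; rwa [show (![ξ, η] 1) = η from rfl, show (![ξ, η] 0) = ξ from rfl] at this
  have hξ0 : ξ ≠ 0 := fun h => hnr' 0 (by simp [h])
  have hX : (0:ℝ) < ‖ξ‖ := norm_pos_iff.2 hξ0
  have hn : (0:ℝ) < ‖η‖ := norm_pos_iff.2 hη0
  have scale : ∀ u : E3, ‖η‖ • u = ‖ξ‖ • η → u = (‖ξ‖ / ‖η‖) • η := by
    intro u hu
    have h2 := congrArg (fun v : E3 => (‖η‖⁻¹ : ℝ) • v) hu
    simp only [smul_smul, inv_mul_cancel₀ hn.ne', one_smul] at h2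
    rw [h2, div_eq_inv_mul]
  have hCS : |⟪ξ, η⟫| < ‖ξ‖ * ‖η‖ := by
    rw [abs_lt]
    constructor
    · have hne : ‖η‖ • (-ξ) ≠ ‖-ξ‖ • η := by
        rw [norm_neg]
        intro hh
        have := scale _ hh
        apply hnr' (-(‖ξ‖ / ‖η‖))
        rw [neg_smul, ← this, neg_neg]
      have h := (inner_lt_norm_mul_iff_real (x := -ξ) (y := η)).2 hne
      simp only [inner_neg_left, norm_neg] at h
      linarith
    · rw [inner_lt_norm_mul_iff_real]
      intro hh
      exact hnr' (‖ξ‖ / ‖η‖) (scale ξ hh).symm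
  obtain ⟨-, hsin, hcos2, hcos, hmem⟩ := my_psi_facts hξ0 hCS
  have hf' : ContDiffOn ℝ (⊤ : ℕ∞) (deriv f) (Set.Ioo (-(π / 2)) (π / 2)) :=
    hf.deriv_of_isOpen isOpen_Ioo (by simp)
  have hdf : HasDerivAt f (deriv f (psi ξ η)) (psi ξ η) :=
    ((hf.differentiableOn (by simp)).differentiableAt (Ioo_mem_nhds hmem.1 hmem.2)).hasDerivAt
  have hdf2 : HasDerivAt (deriv f) (deriv (deriv f) (psi ξ η)) (psi ξ η) :=
    ((hf'.differentiableOn (by simp)).differentiableAt (Ioo_mem_nhds hmem.1 hmem.2)).hasDerivAt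
  have hU : ∀ᶠ y in 𝓝 η, |⟪ξ, y⟫| < ‖ξ‖ * ‖y‖ := by
    have h1 : ContinuousAt (fun y : E3 => |⟪ξ, y⟫|) η :=
      ((innerSL ℝ ξ).continuous.abs).continuousAt
    have h2 : ContinuousAt (fun y : E3 => ‖ξ‖ * ‖y‖) η :=
      (continuous_const.mul continuous_norm).continuousAt
    exact h1.eventually_lt h2 hCS
  have heq : (fun y => fderiv ℝ (Fof a f ξ) y ξ) =ᶠ[𝓝 η]
      fun y => a ‖ξ‖ * ‖ξ‖ *
        (f (psi ξ y) * Real.sin (psi ξ y) + deriv f (psi ξ y) * Real.cos (psi ξ y)) :=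
    hU.mono fun y hy => keyA a f hf ξ hξ0 hy
  have hdG : HasDerivAt (fun t => a ‖ξ‖ * ‖ξ‖ * (f t * Real.sin t + deriv f t * Real.cos t))
      (a ‖ξ‖ * ‖ξ‖ * ((f (psi ξ η) + deriv (deriv f) (psi ξ η)) * Real.cos (psi ξ η)))
      (psi ξ η) := by
    have h1 := (hdf.mul (Real.hasDerivAt_sin (psi ξ η))).add
      (hdf2.mul (Real.hasDerivAt_cos (psi ξ η)))
    have h2 := h1.const_mul (a ‖ξ‖ * ‖ξ‖)
    refine h2.congr_deriv ?_
    ring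
  have hψη := my_psi_hasFDerivAt hξ0 hCS
  have hBig := hdG.comp_hasFDerivAt η hψη
  have hfd : fderiv ℝ (fun y => fderiv ℝ (Fof a f ξ) y ξ) η =
      (a ‖ξ‖ * ‖ξ‖ * ((f (psi ξ η) + deriv (deriv f) (psi ξ η)) * Real.cos (psi ξ η))) •
        ((Real.cos (psi ξ η))⁻¹ •
          ((‖ξ‖ * ‖η‖)⁻¹ • innerSL ℝ ξ - (⟪ξ, η⟫ / (‖ξ‖ * ‖η‖ ^ 3)) • innerSL ℝ η)) := by
    rw [heq.fderiv_eq]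
    exact hBig.fderiv
  have part1 : ∀ w : E3,
      hessApply (Fof a f ξ) η ξ w =
        ⟪(a ‖ξ‖ * ‖η‖⁻¹ * (f (psi ξ η) + deriv (deriv f) (psi ξ η))) •
            (ξ - (⟪ξ, η⟫ / ‖η‖ ^ 2) • η), w⟫ := by
    intro w
    simp only [hessApply]
    rw [hfd]
    simp only [ContinuousLinearMap.smul_apply, ContinuousLinearMap.coe_smul', Pi.smul_apply,
      ContinuousLinearMap.coe_sub', Pi.sub_apply, innerSL_apply_apply, smul_eq_mul,
      real_inner_smul_left, inner_sub_left]
    field_simp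
  refine ⟨part1, ?_⟩
  intro g hg w
  have hev0 : ∀ᶠ y in 𝓝 η, y ≠ (0 : E3) := eventually_ne_nhds hη0
  have heqN : (fun y => fderiv ℝ (fun x : E3 => ‖x‖) y ξ) =ᶠ[𝓝 η]
      fun y => ‖y‖⁻¹ * ⟪ξ, y⟫ :=
    hev0.mono fun y hy => by
      show (fderiv ℝ (fun x : E3 => ‖x‖) y) ξ = ‖y‖⁻¹ * ⟪ξ, y⟫
      rw [(my_norm_hasFDerivAt hy).fderiv]
      simp only [ContinuousLinearMap.smul_apply, innerSL_apply_apply, smul_eq_mul]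
      rw [show ⟪y, ξ⟫ = ⟪ξ, y⟫ from real_inner_comm _ _]
  have hinv : HasFDerivAt (fun y : E3 => ‖y‖⁻¹)
      ((-(‖η‖ ^ 2)⁻¹) • (‖η‖⁻¹ • innerSL ℝ η)) η :=
    (hasDerivAt_inv hn.ne').comp_hasFDerivAt η (my_norm_hasFDerivAt hη0)
  have hNmul := hinv.mul ((innerSL ℝ ξ).hasFDerivAt (x := η))
  have hfdN : fderiv ℝ (fun y => fderiv ℝ (fun x : E3 => ‖x‖) y ξ) η =
      ‖η‖⁻¹ • innerSL ℝ ξ + (innerSL ℝ ξ) η • ((-(‖η‖ ^ 2)⁻¹) • (‖η‖⁻¹ • innerSL ℝ η)) := by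
    rw [heqN.fderiv_eq]
    exact hNmul.fderiv
  have hN : hessApply (fun y : E3 => ‖y‖) η ξ w =
      ‖η‖⁻¹ * ⟪ξ, w⟫ - ⟪ξ, η⟫ * (‖η‖ ^ 3)⁻¹ * ⟪η, w⟫ := by
    simp only [hessApply]
    rw [hfdN]
    simp only [ContinuousLinearMap.add_apply, ContinuousLinearMap.smul_apply,
      ContinuousLinearMap.coe_smul', Pi.smul_apply, innerSL_apply_apply, smul_eq_mul]
    field_simp
    ring
  rw [part1 w, hN]
  simp only [real_inner_smul_left, inner_sub_left]
  rw [← hg (psi ξ η)]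
  field_simp
  ring
end
end

section
/- Let a : (0,∞) → ℝ and f : (−π/2,π/2) → ℝ be smooth, and for linearly independent ξ, η ∈ ℝ³ set F(ξ,η) = a(|ξ|) |η| f(ψ(ξ,η)) with ψ(ξ,η) = arcsin(⟨ξ,η⟩/(|ξ||η|)). Then for all such ξ, η the vector ξ×η is an eigenvector of the Hessian of F in η: (D²_η F(ξ,η)) (ξ×η) = a(|ξ|) |η|^{−1} ( f(ψ) − f'(ψ) tan ψ ) (ξ×η). -/
open Real MeasureTheory intervalIntegral
open scoped RealInnerProductSpace

noncomputable section

lemma inner_cross_left (u v : E3) : ⟪u, cross u v⟫ = 0 := by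
  simp [cross, PiLp.inner_apply, Fin.sum_univ_three, WithLp.equiv_symm_apply, PiLp.toLp_apply]
  ring

lemma inner_cross_right (u v : E3) : ⟪v, cross u v⟫ = 0 := by
  simp [cross, PiLp.inner_apply, Fin.sum_univ_three, WithLp.equiv_symm_apply, PiLp.toLp_apply]
  ring

lemma hasFDerivAt_norm_E3 {y : E3} (hy : y ≠ 0) :
    HasFDerivAt (fun z : E3 => ‖z‖) (‖y‖⁻¹ • innerSL ℝ y) y := by
  have hny : ‖y‖ ≠ 0 := norm_ne_zero_iff.mpr hy
  have h1 := (hasFDerivAt_id y).norm_sq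
  simp only [id] at h1
  have h2 := (Real.hasDerivAt_sqrt (x := ‖y‖ ^ 2) (by positivity)).comp_hasFDerivAt y h1
  simp only [Function.comp_def] at h2
  have h3 : (fun z : E3 => Real.sqrt (‖z‖ ^ 2)) = fun z : E3 => ‖z‖ := by
    funext z; rw [Real.sqrt_sq (norm_nonneg z)]
  rw [h3] at h2
  refine h2.congr_fderiv ?_
  ext v
  simp [Real.sqrt_sq (norm_nonneg y)]
  field_simp

theorem stmt10 (a f : ℝ → ℝ) (ha : ContDiffOn ℝ (⊤ : ℕ∞) a (Set.Ioi 0))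
    (hf : ContDiffOn ℝ (⊤ : ℕ∞) f (Set.Ioo (-(π / 2)) (π / 2)))
    (ξ η : E3) (hli : LinearIndependent ℝ ![ξ, η]) :
    ∀ w : E3,
      hessApply (Fof a f ξ) η (cross ξ η) w =
        ⟪(a ‖ξ‖ * ‖η‖⁻¹ * (f (psi ξ η) - deriv f (psi ξ η) * Real.tan (psi ξ η))) •
            cross ξ η, w⟫ := by
  intro w
  have hξ : ξ ≠ 0 := by simpa using hli.ne_zero 0
  have hη : η ≠ 0 := by simpa using hli.ne_zero 1
  have hB0 : (0:ℝ) < ‖ξ‖ := norm_pos_iff.mpr hξ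
  have hn0 : (0:ℝ) < ‖η‖ := norm_pos_iff.mpr hη
  set c : E3 := cross ξ η with hcdef
  have hξc : ⟪ξ, c⟫ = 0 := inner_cross_left ξ η
  have hηc : ⟪η, c⟫ = 0 := inner_cross_right ξ η
  have hpair := LinearIndependent.pair_iff.mp hli
  -- strict Cauchy–Schwarz
  have hCS : |⟪ξ, η⟫| < ‖ξ‖ * ‖η‖ := by
    rw [abs_lt]
    constructor
    · have h2 : ‖η‖ • (-ξ) ≠ ‖(-ξ : E3)‖ • η := by
        rw [norm_neg, smul_neg]
        intro h
        have h0 : ‖η‖ • ξ + ‖ξ‖ • η = 0 := by rw [← h]; abel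
        exact (norm_ne_zero_iff.mpr hη) (hpair _ _ h0).1
      have h3 := inner_lt_norm_mul_iff_real.mpr h2
      rw [inner_neg_left, norm_neg] at h3
      linarith
    · have h1 : ‖η‖ • ξ ≠ ‖ξ‖ • η := by
        intro h
        have h0 : ‖η‖ • ξ + (-‖ξ‖) • η = 0 := by rw [neg_smul, h]; abel
        exact (norm_ne_zero_iff.mpr hη) (hpair _ _ h0).1
      exact inner_lt_norm_mul_iff_real.mpr h1
  -- abbreviations
  set s : E3 → ℝ := fun y => ⟪ξ, y⟫ / (‖ξ‖ * ‖y‖) with hsdef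
  set P : ℝ → ℝ := fun u => f (Real.arcsin u) with hPdef
  set Q : ℝ → ℝ := fun u => deriv f (Real.arcsin u) * (Real.sqrt (1 - u ^ 2))⁻¹ with hQdef
  set G : E3 → ℝ :=
    fun y => a ‖ξ‖ * (P (s y) * ‖y‖⁻¹ - Q (s y) * ⟪ξ, y⟫ * ‖ξ‖⁻¹ * (‖y‖ ^ 2)⁻¹) with hGdef
  set U : Set E3 := {y : E3 | y ≠ 0 ∧ |⟪ξ, y⟫| < ‖ξ‖ * ‖y‖} with hUdef
  have hUopen : IsOpen U := by
    have hU2 : U = {(0:E3)}ᶜ ∩ {y : E3 | |⟪ξ, y⟫| < ‖ξ‖ * ‖y‖} := by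
      ext y; simp [hUdef]
    rw [hU2]
    exact isOpen_compl_singleton.inter
      (isOpen_lt ((continuous_const.inner continuous_id).abs) (continuous_const.mul continuous_norm))
  have hηU : η ∈ U := ⟨hη, hCS⟩
  have hsmem : ∀ y ∈ U, s y ∈ Set.Ioo (-1:ℝ) 1 := by
    intro y hy
    have hBnypos : 0 < ‖ξ‖ * ‖y‖ := mul_pos hB0 (norm_pos_iff.mpr hy.1)
    rw [Set.mem_Ioo, ← abs_lt, hsdef]
    rw [abs_div, abs_of_pos hBnypos]
    exact (div_lt_one hBnypos).mpr hy.2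
  -- derivative of P
  have hPQ : ∀ u ∈ Set.Ioo (-1:ℝ) 1, HasDerivAt P (Q u) u := by
    intro u hu
    have hmem : Real.arcsin u ∈ Set.Ioo (-(π/2)) (π/2) :=
      ⟨Real.neg_pi_div_two_lt_arcsin.mpr hu.1, Real.arcsin_lt_pi_div_two.mpr hu.2⟩
    have hfd : HasDerivAt f (deriv f (Real.arcsin u)) (Real.arcsin u) :=
      (((hf.differentiableOn (by simp)).differentiableAt (isOpen_Ioo.mem_nhds hmem))).hasDerivAt
    have harc := Real.hasDerivAt_arcsin (ne_of_gt hu.1) (ne_of_lt hu.2)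
    have hc := hfd.comp u harc
    simpa [hPdef, hQdef, Function.comp_def, one_div] using hc
  -- differentiability of Q
  have hderivf : ContDiffOn ℝ (⊤ : ℕ∞) (deriv f) (Set.Ioo (-(π/2)) (π/2)) :=
    hf.deriv_of_isOpen isOpen_Ioo (by simp)
  have hQd : ∀ u ∈ Set.Ioo (-1:ℝ) 1, DifferentiableAt ℝ Q u := by
    intro u hu
    have hmem : Real.arcsin u ∈ Set.Ioo (-(π/2)) (π/2) :=
      ⟨Real.neg_pi_div_two_lt_arcsin.mpr hu.1, Real.arcsin_lt_pi_div_two.mpr hu.2⟩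
    have h1 : DifferentiableAt ℝ (deriv f) (Real.arcsin u) :=
      (hderivf.differentiableOn (by simp)).differentiableAt (isOpen_Ioo.mem_nhds hmem)
    have harc := (Real.hasDerivAt_arcsin (ne_of_gt hu.1) (ne_of_lt hu.2)).differentiableAt
    have hsq : (0:ℝ) < 1 - u ^ 2 := by nlinarith [hu.1, hu.2]
    have h2 : DifferentiableAt ℝ (fun v : ℝ => (Real.sqrt (1 - v ^ 2))⁻¹) u := by
      apply DifferentiableAt.inv
      · exact (Real.hasDerivAt_sqrt hsq.ne').differentiableAt.comp u
          ((differentiableAt_const 1).sub (differentiableAt_id.pow 2))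
      · exact Real.sqrt_ne_zero'.mpr hsq
    exact (h1.comp u harc).mul h2
  -- the first directional derivative on U
  have hkey : ∀ y ∈ U, fderiv ℝ (Fof a f ξ) y c = ⟪y, c⟫ * G y := by
    intro y hy
    have hny : ‖y‖ ≠ 0 := norm_ne_zero_iff.mpr hy.1
    have hBny : (‖ξ‖ * ‖y‖) ≠ 0 := mul_ne_zero (ne_of_gt hB0) hny
    have hnorm := hasFDerivAt_norm_E3 hy.1
    have hinv := (hasDerivAt_inv hBny).comp_hasFDerivAt y (hnorm.const_mul ‖ξ‖)
    simp only [Function.comp_def] at hinv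
    have hinner : HasFDerivAt (fun z : E3 => ⟪ξ, z⟫) (innerSL ℝ ξ) y := (innerSL ℝ ξ).hasFDerivAt
    have hs' : HasFDerivAt s
        (⟪ξ, y⟫ • ((-((‖ξ‖ * ‖y‖) ^ 2)⁻¹) • (‖ξ‖ • (‖y‖⁻¹ • innerSL ℝ y))) +
          (‖ξ‖ * ‖y‖)⁻¹ • innerSL ℝ ξ) y := by
      have hmul := hinner.mul hinv
      have hfun : s = fun z : E3 => ⟪ξ, z⟫ * (‖ξ‖ * ‖z‖)⁻¹ := by
        funext z; simp [hsdef, div_eq_mul_inv]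
      rw [hfun]; exact hmul
    have hPs := (hPQ (s y) (hsmem y hy)).comp_hasFDerivAt y hs'
    simp only [Function.comp_def] at hPs
    have hφ : HasFDerivAt (fun z : E3 => a ‖ξ‖ * (‖z‖ * P (s z))) _ y :=
      (hnorm.mul hPs).const_mul (a ‖ξ‖)
    have hFof : Fof a f ξ = fun z : E3 => a ‖ξ‖ * (‖z‖ * P (s z)) := by
      funext z; simp [Fof, psi, hPdef, hsdef, mul_assoc]
    rw [hFof, hφ.fderiv]
    simp only [ContinuousLinearMap.add_apply, ContinuousLinearMap.coe_smul', Pi.smul_apply,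
      innerSL_apply_apply, smul_eq_mul, hξc, hGdef, mul_zero, zero_mul, add_zero, zero_add]
    field_simp
    ring
  -- differentiability of s at η
  have hsdη : DifferentiableAt ℝ s η := by
    have hny : ‖η‖ ≠ 0 := ne_of_gt hn0
    have hBny : (‖ξ‖ * ‖η‖) ≠ 0 := mul_ne_zero (ne_of_gt hB0) hny
    have hnorm := hasFDerivAt_norm_E3 hη
    have hinv := (hasDerivAt_inv hBny).comp_hasFDerivAt η (hnorm.const_mul ‖ξ‖)
    simp only [Function.comp_def] at hinv
    have hinner : HasFDerivAt (fun z : E3 => ⟪ξ, z⟫) (innerSL ℝ ξ) η := (innerSL ℝ ξ).hasFDerivAt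
    have hmul := hinner.mul hinv
    have hfun : s = fun z : E3 => ⟪ξ, z⟫ * (‖ξ‖ * ‖z‖)⁻¹ := by
      funext z; simp [hsdef, div_eq_mul_inv]
    rw [hfun]; exact hmul.differentiableAt
  -- differentiability of G at η
  have hGd : DifferentiableAt ℝ G η := by
    have hny : ‖η‖ ≠ 0 := ne_of_gt hn0
    have h1 : DifferentiableAt ℝ (fun y : E3 => P (s y)) η :=
      ((hPQ (s η) (hsmem η hηU)).differentiableAt).comp η hsdη
    have h2 : DifferentiableAt ℝ (fun y : E3 => Q (s y)) η :=
      (hQd (s η) (hsmem η hηU)).comp η hsdη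
    have h3 : DifferentiableAt ℝ (fun y : E3 => ‖y‖⁻¹) η :=
      ((hasFDerivAt_norm_E3 hη).differentiableAt).inv hny
    have h4 : DifferentiableAt ℝ (fun y : E3 => ⟪ξ, y⟫) η :=
      (differentiableAt_const ξ).inner ℝ differentiableAt_id
    have h5 : DifferentiableAt ℝ (fun y : E3 => (‖y‖ ^ 2)⁻¹) η := by
      apply DifferentiableAt.inv
      · exact ((hasFDerivAt_norm_E3 hη).differentiableAt).pow 2
      · positivity
    rw [hGdef]
    exact (((h1.mul h3).sub (((h2.mul h4).mul_const _).mul h5)).const_mul _)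
  -- the product rule at η
  have hic : HasFDerivAt (fun y : E3 => ⟪y, c⟫) (innerSL ℝ c) η := by
    have hcomm : (fun y : E3 => ⟪y, c⟫) = fun y : E3 => ⟪c, y⟫ := by
      funext z; exact real_inner_comm _ _
    rw [hcomm]; exact (innerSL ℝ c).hasFDerivAt
  have hprod : HasFDerivAt (fun y => ⟪y, c⟫ * G y) _ η := hic.mul hGd.hasFDerivAt
  have heq : (fun y => fderiv ℝ (Fof a f ξ) y c) =ᶠ[nhds η] fun y => ⟪y, c⟫ * G y :=
    Filter.eventuallyEq_of_mem (hUopen.mem_nhds hηU) hkey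
  have hL : hessApply (Fof a f ξ) η c w = fderiv ℝ (fun y => ⟪y, c⟫ * G y) η w := by
    show fderiv ℝ (fun y => fderiv ℝ (Fof a f ξ) y c) η w = _
    rw [heq.fderiv_eq]
  rw [hL, hprod.fderiv]
  simp only [ContinuousLinearMap.add_apply, ContinuousLinearMap.coe_smul', Pi.smul_apply,
    innerSL_apply_apply, smul_eq_mul, hηc, zero_mul, zero_add]
  rw [real_inner_smul_left]
  have hcoef : G η =
      a ‖ξ‖ * ‖η‖⁻¹ * (f (psi ξ η) - deriv f (psi ξ η) * Real.tan (psi ξ η)) := by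
    have hny : ‖η‖ ≠ 0 := ne_of_gt hn0
    have hpsi : psi ξ η = Real.arcsin (s η) := rfl
    have hsmemη := hsmem η hηU
    have hsq : (0:ℝ) < 1 - s η ^ 2 := by nlinarith [hsmemη.1, hsmemη.2]
    have hsqrt : Real.sqrt (1 - s η ^ 2) ≠ 0 := Real.sqrt_ne_zero'.mpr hsq
    have hinner : ⟪ξ, η⟫ = s η * (‖ξ‖ * ‖η‖) := by
      rw [hsdef]; field_simp
    rw [hGdef, hpsi]
    simp only [hPdef, hQdef, Real.tan_arcsin]
    rw [hinner]
    field_simp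
  rw [hcoef]
end
end

section
/- Let a : (0,∞) → ℝ and f : (−π/2,π/2) → ℝ be smooth, and for linearly independent ξ, η ∈ ℝ³ set F(ξ,η) = a(|ξ|) |η| f(ψ(ξ,η)) with ψ(ξ,η) = arcsin(⟨ξ,η⟩/(|ξ||η|)). Then for all such ξ, η and each i ∈ {1,2,3}: ∂F/∂ξ_i (ξ,η) − Σ_{j=1}^{3} η_j ∂²F/(∂ξ_j ∂η_i)(ξ,η) = [ ( a'(|ξ|) + a(|ξ|)/|ξ| ) ( f(ψ) − tan ψ · f'(ψ) ) − ( a(|ξ|)/|ξ| ) ( f(ψ) + f''(ψ) ) ] · ( (|η|/|ξ|) ξ_i − sin ψ · η_i ). -/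
open Real MeasureTheory intervalIntegral
open scoped RealInnerProductSpace

noncomputable section

/-- the `i`-th standard basis vector of `ℝ³` -/
def e (i : Fin 3) : E3 := EuclideanSpace.single i (1 : ℝ)

lemma hasFDerivAt_inner_right (w x : E3) :
    HasFDerivAt (fun y : E3 => ⟪y, w⟫) (innerSL ℝ w) x := by
  have h : (fun y : E3 => ⟪y, w⟫) = fun y : E3 => (innerSL ℝ w) y := by
    funext y; simp only [innerSL_apply_apply]; exact real_inner_comm w y
  rw [h]; exact (innerSL ℝ w).hasFDerivAt

lemma hasFDerivAt_norm' (x : E3) (hx : x ≠ 0) :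
    HasFDerivAt (fun y : E3 => ‖y‖) (‖x‖⁻¹ • innerSL ℝ x) x := by
  have hn : (0:ℝ) < ‖x‖ := norm_pos_iff.2 hx
  have hq : HasFDerivAt (fun y : E3 => ⟪y, y⟫) ((2 * ‖x‖) • (‖x‖⁻¹ • innerSL ℝ x)) x := by
    refine ((hasFDerivAt_id x).inner ℝ (hasFDerivAt_id x)).congr_fderiv ?_; symm
    ext v
    simp only [ContinuousLinearMap.smul_apply, innerSL_apply_apply, fderivInnerCLM_apply,
      ContinuousLinearMap.comp_apply, ContinuousLinearMap.prod_apply, ContinuousLinearMap.id_apply,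
      smul_eq_mul]
    simp only [id_eq]
    rw [real_inner_comm v x]
    have h2 : 2 * ‖x‖ * (‖x‖⁻¹ * ⟪v, x⟫) = (2 * (‖x‖ * ‖x‖⁻¹)) * ⟪v, x⟫ := by ring
    rw [h2, mul_inv_cancel₀ (ne_of_gt hn)]
    ring
  have hsq : Real.sqrt ⟪x, x⟫ = ‖x‖ := by
    rw [real_inner_self_eq_norm_mul_norm, Real.sqrt_mul_self (norm_nonneg x)]
  have hs : HasDerivAt Real.sqrt (1 / (2 * ‖x‖)) ⟪x, x⟫ := by
    have := Real.hasDerivAt_sqrt (x := ⟪x, x⟫) (inner_self_ne_zero.2 hx)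
    rwa [hsq] at this
  have hcomp := HasDerivAt.comp_hasFDerivAt_of_eq x hs hq rfl
  have heq : (Real.sqrt ∘ fun y : E3 => ⟪y, y⟫) = fun y : E3 => ‖y‖ := by
    funext y
    simp only [Function.comp_apply, real_inner_self_eq_norm_mul_norm,
      Real.sqrt_mul_self (norm_nonneg y)]
  rw [heq] at hcomp
  have h1 : (1 / (2 * ‖x‖)) • ((2 * ‖x‖) • (‖x‖⁻¹ • innerSL ℝ x)) = ‖x‖⁻¹ • innerSL ℝ x := by
    rw [smul_smul, show (1 / (2 * ‖x‖)) * (2 * ‖x‖) = 1 by field_simp, one_smul]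
  rwa [h1] at hcomp

def psiL (x w : E3) : E3 →L[ℝ] ℝ :=
  (Real.cos (psi x w) * (‖x‖ * ‖w‖))⁻¹ •
    (innerSL ℝ w - (⟪x, w⟫ / ‖x‖ ^ 2) • innerSL ℝ x)

lemma psi_comm (x w : E3) : psi x w = psi w x := by
  unfold psi; rw [real_inner_comm, mul_comm]

lemma abs_u_lt_one (x w : E3) (h : |⟪x, w⟫| < ‖x‖ * ‖w‖) (hp : 0 < ‖x‖ * ‖w‖) :
    |⟪x, w⟫ / (‖x‖ * ‖w‖)| < 1 := by
  rw [abs_div, abs_of_pos hp]; exact (div_lt_one hp).2 h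

lemma cos_psi_eq (x w : E3) : Real.cos (psi x w) = Real.sqrt (1 - (⟪x, w⟫ / (‖x‖ * ‖w‖)) ^ 2) := by
  rw [psi, Real.cos_arcsin]

lemma cos_psi_pos (x w : E3) (h : |⟪x, w⟫| < ‖x‖ * ‖w‖) (hp : 0 < ‖x‖ * ‖w‖) :
    0 < Real.cos (psi x w) := by
  rw [cos_psi_eq]
  have h2 : (⟪x, w⟫ / (‖x‖ * ‖w‖)) ^ 2 < 1 := by
    have h3 := abs_u_lt_one x w h hp
    nlinarith [sq_abs (⟪x, w⟫ / (‖x‖ * ‖w‖)), abs_nonneg (⟪x, w⟫ / (‖x‖ * ‖w‖))]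
  exact Real.sqrt_pos.2 (by linarith)

lemma hasFDerivAt_psi_left (x w : E3) (hx : x ≠ 0) (hw : w ≠ 0)
    (h : |⟪x, w⟫| < ‖x‖ * ‖w‖) :
    HasFDerivAt (fun y => psi y w) (psiL x w) x := by
  have hnx : (0:ℝ) < ‖x‖ := norm_pos_iff.2 hx
  have hnw : (0:ℝ) < ‖w‖ := norm_pos_iff.2 hw
  have hp : (0:ℝ) < ‖x‖ * ‖w‖ := mul_pos hnx hnw
  have hu := abs_u_lt_one x w h hp
  have hden := (hasFDerivAt_norm' x hx).mul_const ‖w‖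
  have hinv := (hasDerivAt_inv (ne_of_gt hp)).comp_hasFDerivAt_of_eq x hden rfl
  have hu' := (hasFDerivAt_inner_right w x).mul hinv
  have h1 : (⟪x, w⟫ / (‖x‖ * ‖w‖)) ≠ -1 := by
    intro hc; rw [hc] at hu; simp at hu
  have h2 : (⟪x, w⟫ / (‖x‖ * ‖w‖)) ≠ 1 := by
    intro hc; rw [hc] at hu; simp at hu
  have harc := (Real.hasDerivAt_arcsin h1 h2).comp_hasFDerivAt_of_eq x hu'
    (by simp [div_eq_mul_inv])
  have hfun2 : (Real.arcsin ∘ fun y : E3 => ⟪y, w⟫ * ((fun y => y⁻¹) ∘ fun y : E3 => ‖y‖ * ‖w‖) y)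
      = fun y => psi y w := by
    funext y; simp [psi, Function.comp, div_eq_mul_inv]
  simp only [Pi.mul_def, Pi.add_def, Pi.sub_def] at harc
  rw [hfun2] at harc
  refine harc.congr_fderiv ?_; symm
  have hcos : Real.cos (psi x w) = Real.sqrt (1 - (⟪x, w⟫ / (‖x‖ * ‖w‖)) ^ 2) := cos_psi_eq x w
  have hcpos : 0 < Real.cos (psi x w) := cos_psi_pos x w h hp
  ext v
  simp only [psiL, ContinuousLinearMap.smul_apply, ContinuousLinearMap.sub_apply,
    innerSL_apply_apply, ContinuousLinearMap.add_apply, smul_eq_mul, Function.comp_apply]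
  rw [← hcos]
  generalize ⟪w, v⟫ = I1
  generalize hxv : ⟪x, v⟫ = I2
  generalize hxw : ⟪x, w⟫ = I3
  field_simp
  ring

lemma fderiv_F_right_apply (a f : ℝ → ℝ) (x w : E3) (hx : x ≠ 0) (hw : w ≠ 0)
    (h : |⟪x, w⟫| < ‖x‖ * ‖w‖) (hfd : DifferentiableAt ℝ f (psi x w)) (i : Fin 3) :
    fderiv ℝ (fun y => Fof a f x y) w (e i) =
      a ‖x‖ * f (psi x w) * (w i / ‖w‖) +
        a ‖x‖ * deriv f (psi x w) *
          ((x i - ⟪x, w⟫ / ‖w‖ ^ 2 * w i) / (Real.cos (psi x w) * ‖x‖)) := by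
  have hnx : (0:ℝ) < ‖x‖ := norm_pos_iff.2 hx
  have hnw : (0:ℝ) < ‖w‖ := norm_pos_iff.2 hw
  have h' : |⟪w, x⟫| < ‖w‖ * ‖x‖ := by rwa [real_inner_comm, mul_comm]
  have hψr : HasFDerivAt (fun y => psi x y) (psiL w x) w := by
    have heq : (fun y => psi x y) = fun y => psi y x := by funext y; exact psi_comm x y
    rw [heq]; exact hasFDerivAt_psi_left w x hw hx h'
  have hcomp := (hfd.hasDerivAt).comp_hasFDerivAt_of_eq w hψr rfl
  have H := ((hasFDerivAt_norm' w hw).mul hcomp).const_mul (a ‖x‖)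
  have hfun : (fun y : E3 => a ‖x‖ * (‖y‖ * (f ∘ fun y => psi x y) y)) =
      fun y => Fof a f x y := by
    funext y; simp only [Function.comp_apply, Fof]; ring
  simp only [Pi.mul_def, Pi.add_def, Pi.sub_def] at H
  rw [hfun] at H
  rw [H.fderiv]
  have hcpos : 0 < Real.cos (psi w x) := cos_psi_pos w x h' (mul_pos hnw hnx)
  simp only [psiL, ContinuousLinearMap.smul_apply, ContinuousLinearMap.add_apply,
    ContinuousLinearMap.sub_apply, innerSL_apply_apply, smul_eq_mul, Function.comp_apply]
  rw [psi_comm w x] at hcpos ⊢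
  have hei1 : ⟪w, e i⟫ = w i := by
    simp [e, EuclideanSpace.inner_single_right]
  have hei2 : ⟪x, e i⟫ = x i := by
    simp [e, EuclideanSpace.inner_single_right]
  rw [hei1, hei2, real_inner_comm w x]
  generalize hxw : ⟪x, w⟫ = I3
  generalize f (psi x w) = A1
  generalize deriv f (psi x w) = A2
  generalize Real.cos (psi x w) = C at hcpos ⊢
  generalize a ‖x‖ = A0
  generalize x i = X
  generalize w i = W
  field_simp
  ring

lemma fderiv_F_left_apply (a f : ℝ → ℝ) (x w : E3) (hx : x ≠ 0) (hw : w ≠ 0)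
    (h : |⟪x, w⟫| < ‖x‖ * ‖w‖) (had : DifferentiableAt ℝ a ‖x‖)
    (hfd : DifferentiableAt ℝ f (psi x w)) (i : Fin 3) :
    fderiv ℝ (fun y => Fof a f y w) x (e i) =
      deriv a ‖x‖ * ‖w‖ * f (psi x w) * (x i / ‖x‖) +
        a ‖x‖ * ‖w‖ * deriv f (psi x w) *
          ((w i - ⟪x, w⟫ / ‖x‖ ^ 2 * x i) / (Real.cos (psi x w) * (‖x‖ * ‖w‖))) := by
  have hnx : (0:ℝ) < ‖x‖ := norm_pos_iff.2 hx
  have hnw : (0:ℝ) < ‖w‖ := norm_pos_iff.2 hw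
  have hcpos : 0 < Real.cos (psi x w) := cos_psi_pos x w h (mul_pos hnx hnw)
  have hA := (had.hasDerivAt).comp_hasFDerivAt_of_eq x (hasFDerivAt_norm' x hx) rfl
  have hA2 := hA.mul_const ‖w‖
  have hcomp := (hfd.hasDerivAt).comp_hasFDerivAt_of_eq x (hasFDerivAt_psi_left x w hx hw h) rfl
  have H := hA2.mul hcomp
  have hfun : (fun y : E3 => ((a ∘ fun y : E3 => ‖y‖) y * ‖w‖) * (f ∘ fun y => psi y w) y) =
      fun y => Fof a f y w := by
    funext y; simp only [Function.comp_apply, Fof]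
  simp only [Pi.mul_def, Pi.add_def, Pi.sub_def] at H
  rw [hfun] at H
  rw [H.fderiv]
  simp only [psiL, ContinuousLinearMap.smul_apply, ContinuousLinearMap.add_apply,
    ContinuousLinearMap.sub_apply, innerSL_apply_apply, smul_eq_mul, Function.comp_apply]
  have hei1 : ⟪w, e i⟫ = w i := by simp [e, EuclideanSpace.inner_single_right]
  have hei2 : ⟪x, e i⟫ = x i := by simp [e, EuclideanSpace.inner_single_right]
  rw [hei1, hei2]
  generalize hxw : ⟪x, w⟫ = I3
  generalize f (psi x w) = A1
  generalize deriv f (psi x w) = A2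
  generalize Real.cos (psi x w) = C at hcpos ⊢
  generalize a ‖x‖ = A0
  generalize deriv a ‖x‖ = A0'
  generalize x i = X
  generalize w i = W
  field_simp
  ring

def Hf (a f : ℝ → ℝ) (w : E3) (i : Fin 3) (x : E3) : ℝ :=
  a ‖x‖ * f (psi x w) * (w i / ‖w‖) +
    a ‖x‖ * deriv f (psi x w) *
      ((x i - ⟪x, w⟫ / ‖w‖ ^ 2 * w i) / (Real.cos (psi x w) * ‖x‖))

set_option maxHeartbeats 2000000 in
lemma hasFDerivAt_Hf (a f : ℝ → ℝ) (w : E3) (i : Fin 3) (x : E3) (hx : x ≠ 0) (hw : w ≠ 0)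
    (h : |⟪x, w⟫| < ‖x‖ * ‖w‖)
    (hda : HasDerivAt a (deriv a ‖x‖) ‖x‖)
    (hf1 : HasDerivAt f (deriv f (psi x w)) (psi x w))
    (hf2 : HasDerivAt (deriv f) (deriv (deriv f) (psi x w)) (psi x w)) :
    ∃ L : E3 →L[ℝ] ℝ, HasFDerivAt (Hf a f w i) L x ∧ ∀ v : E3, L v =
      (deriv a ‖x‖ * f (psi x w) * (w i / ‖w‖) +
        deriv a ‖x‖ * deriv f (psi x w) * ((x i - ⟪x, w⟫ / ‖w‖ ^ 2 * w i) / (Real.cos (psi x w) * ‖x‖)) -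
        a ‖x‖ * deriv f (psi x w) * ((x i - ⟪x, w⟫ / ‖w‖ ^ 2 * w i) / (Real.cos (psi x w) * ‖x‖ ^ 2))) *
          (⟪x, v⟫ / ‖x‖) +
      (a ‖x‖ * deriv f (psi x w) * (w i / ‖w‖) +
        a ‖x‖ * deriv (deriv f) (psi x w) * ((x i - ⟪x, w⟫ / ‖w‖ ^ 2 * w i) / (Real.cos (psi x w) * ‖x‖)) +
        a ‖x‖ * deriv f (psi x w) * ((x i - ⟪x, w⟫ / ‖w‖ ^ 2 * w i) * Real.sin (psi x w) / (Real.cos (psi x w) ^ 2 * ‖x‖))) *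
          ((⟪w, v⟫ - ⟪x, w⟫ / ‖x‖ ^ 2 * ⟪x, v⟫) / (Real.cos (psi x w) * (‖x‖ * ‖w‖))) -
      a ‖x‖ * deriv f (psi x w) * (w i / (Real.cos (psi x w) * ‖x‖ * ‖w‖ ^ 2)) * ⟪w, v⟫ +
      a ‖x‖ * deriv f (psi x w) / (Real.cos (psi x w) * ‖x‖) * ⟪e i, v⟫ := by
  have hnx : (0:ℝ) < ‖x‖ := norm_pos_iff.2 hx
  have hnw : (0:ℝ) < ‖w‖ := norm_pos_iff.2 hw
  have hcpos : 0 < Real.cos (psi x w) := cos_psi_pos x w h (mul_pos hnx hnw)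
  have hψ := hasFDerivAt_psi_left x w hx hw h
  have hA := hda.comp_hasFDerivAt_of_eq x (hasFDerivAt_norm' x hx) rfl
  have hfψ := hf1.comp_hasFDerivAt_of_eq x hψ rfl
  have hf'ψ := hf2.comp_hasFDerivAt_of_eq x hψ rfl
  have hT1 := (hA.mul hfψ).mul_const (w i / ‖w‖)
  have hxi : HasFDerivAt (fun y : E3 => y i) (innerSL ℝ (e i)) x := by
    have heq : (fun y : E3 => y i) = fun y : E3 => ⟪y, e i⟫ := by
      funext y; simp [e, EuclideanSpace.inner_single_right]
    rw [heq]; exact hasFDerivAt_inner_right (e i) x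
  have hN := hxi.sub ((hasFDerivAt_inner_right w x).mul_const (w i / ‖w‖ ^ 2))
  have hcψ := (Real.hasDerivAt_cos (psi x w)).comp_hasFDerivAt_of_eq x hψ rfl
  have hD := hcψ.mul (hasFDerivAt_norm' x hx)
  have hDne : (Real.cos ∘ fun y => psi y w) x * ‖x‖ ≠ 0 :=
    mul_ne_zero (ne_of_gt hcpos) (ne_of_gt hnx)
  have hinv := (hasDerivAt_inv hDne).comp_hasFDerivAt_of_eq x hD rfl
  have hT2 := (hA.mul hf'ψ).mul (hN.mul hinv)
  have H := hT1.add hT2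
  have hfun : (fun y : E3 =>
      ((a ∘ fun y : E3 => ‖y‖) y * (f ∘ fun y => psi y w) y) * (w i / ‖w‖) +
      ((a ∘ fun y : E3 => ‖y‖) y * ((deriv f) ∘ fun y => psi y w) y) *
        ((y i - ⟪y, w⟫ * (w i / ‖w‖ ^ 2)) *
          ((fun y => y⁻¹) ∘ fun y => (Real.cos ∘ fun y => psi y w) y * ‖y‖) y)) =
      Hf a f w i := by
    funext y
    simp only [Function.comp_apply, Hf, div_eq_mul_inv]
    ring
  simp only [Pi.mul_def, Pi.add_def, Pi.sub_def] at H
  rw [hfun] at H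
  refine ⟨_, H, fun v => ?_⟩
  simp only [psiL, ContinuousLinearMap.smul_apply, ContinuousLinearMap.add_apply,
    ContinuousLinearMap.sub_apply, innerSL_apply_apply, smul_eq_mul, Function.comp_apply,
    ContinuousLinearMap.coe_smul', Pi.smul_apply]
  rw [real_inner_comm w x]
  generalize hxw : ⟪x, w⟫ = I3
  generalize ⟪x, v⟫ = I1
  generalize ⟪w, v⟫ = I2
  generalize ⟪e i, v⟫ = I4
  generalize f (psi x w) = A1
  generalize deriv f (psi x w) = A2
  generalize deriv (deriv f) (psi x w) = A3
  generalize Real.sin (psi x w) = Sn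
  generalize Real.cos (psi x w) = C at hcpos ⊢
  generalize a ‖x‖ = A0
  generalize deriv a ‖x‖ = A0'
  generalize x i = X
  generalize w i = W
  have hC : C ≠ 0 := ne_of_gt hcpos
  field_simp
  ring


set_option maxHeartbeats 4000000 in
theorem stmt12 (a f : ℝ → ℝ) (ha : ContDiffOn ℝ (⊤ : ℕ∞) a (Set.Ioi 0))
    (hf : ContDiffOn ℝ (⊤ : ℕ∞) f (Set.Ioo (-(π / 2)) (π / 2)))
    (ξ η : E3) (hli : LinearIndependent ℝ ![ξ, η]) :
    ∀ i : Fin 3,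
      fderiv ℝ (fun ξ' => Fof a f ξ' η) ξ (e i) -
        ∑ j : Fin 3, η j *
          fderiv ℝ (fun ξ' => fderiv ℝ (fun η' => Fof a f ξ' η') η (e i)) ξ (e j) =
      ((deriv a ‖ξ‖ + a ‖ξ‖ / ‖ξ‖) *
          (f (psi ξ η) - Real.tan (psi ξ η) * deriv f (psi ξ η)) -
        a ‖ξ‖ / ‖ξ‖ * (f (psi ξ η) + deriv (deriv f) (psi ξ η))) *
      (‖η‖ / ‖ξ‖ * ξ i - Real.sin (psi ξ η) * η i) := by

  intro i
  obtain ⟨hη, hnsc⟩ := linearIndependent_fin2.1 hli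
  simp only [Matrix.cons_val_one, Matrix.head_cons, Matrix.cons_val_zero] at hη hnsc
  have hξ : ξ ≠ 0 := by
    intro hc
    exact hnsc 0 (by rw [hc, zero_smul])
  have hnx : (0:ℝ) < ‖ξ‖ := norm_pos_iff.2 hξ
  have hnw : (0:ℝ) < ‖η‖ := norm_pos_iff.2 hη
  have hlt : |⟪ξ, η⟫| < ‖ξ‖ * ‖η‖ := by
    rw [abs_lt]
    constructor
    · have h1 : ⟪-ξ, η⟫ < ‖-ξ‖ * ‖η‖ := by
        rw [inner_lt_norm_mul_iff_real]
        intro hc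
        rw [norm_neg, smul_neg] at hc
        have hc2 : ‖η‖ • ξ = (-‖ξ‖) • η := by
          rw [neg_smul, ← hc, neg_neg]
        have h3 := congrArg (fun z => (‖η‖⁻¹ : ℝ) • z) hc2
        simp only [smul_smul, inv_mul_cancel₀ (ne_of_gt hnw), one_smul] at h3
        exact hnsc (‖η‖⁻¹ * (-‖ξ‖)) h3.symm
      rw [inner_neg_left, norm_neg] at h1
      linarith
    · rw [inner_lt_norm_mul_iff_real]
      intro hc
      have h3 := congrArg (fun z => (‖η‖⁻¹ : ℝ) • z) hc
      simp only [smul_smul, inv_mul_cancel₀ (ne_of_gt hnw), one_smul] at h3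
      exact hnsc (‖η‖⁻¹ * ‖ξ‖) h3.symm
  have hmemIoo : ∀ x : E3, x ≠ 0 → |⟪x, η⟫| < ‖x‖ * ‖η‖ →
      psi x η ∈ Set.Ioo (-(π / 2)) (π / 2) := by
    intro x hx0 hxlt
    have hp : (0:ℝ) < ‖x‖ * ‖η‖ := mul_pos (norm_pos_iff.2 hx0) hnw
    have hu := abs_u_lt_one x η hxlt hp
    rw [abs_lt] at hu
    exact ⟨Real.neg_pi_div_two_lt_arcsin.2 hu.1, Real.arcsin_lt_pi_div_two.2 hu.2⟩
  have hfd : ∀ t ∈ Set.Ioo (-(π / 2)) (π / 2), DifferentiableAt ℝ f t := fun t ht =>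
    ((hf.contDiffAt (isOpen_Ioo.mem_nhds ht)).differentiableAt (by simp))
  have hf' : ContDiffOn ℝ (⊤ : ℕ∞) (deriv f) (Set.Ioo (-(π / 2)) (π / 2)) :=
    hf.deriv_of_isOpen isOpen_Ioo (by simp)
  have hf'd : ∀ t ∈ Set.Ioo (-(π / 2)) (π / 2), DifferentiableAt ℝ (deriv f) t := fun t ht =>
    ((hf'.contDiffAt (isOpen_Ioo.mem_nhds ht)).differentiableAt (by simp))
  have hmem := hmemIoo ξ hξ hlt
  have hf1 : HasDerivAt f (deriv f (psi ξ η)) (psi ξ η) := (hfd _ hmem).hasDerivAt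
  have hf2 : HasDerivAt (deriv f) (deriv (deriv f) (psi ξ η)) (psi ξ η) :=
    (hf'd _ hmem).hasDerivAt
  have hda : HasDerivAt a (deriv a ‖ξ‖) ‖ξ‖ :=
    ((ha.contDiffAt (isOpen_Ioi.mem_nhds hnx)).differentiableAt (by simp)).hasDerivAt
  -- first term
  have hT1 := fderiv_F_left_apply a f ξ η hξ hη hlt
    ((ha.contDiffAt (isOpen_Ioi.mem_nhds hnx)).differentiableAt (by simp)) (hfd _ hmem) i
  -- second term
  obtain ⟨L, hH, hLval⟩ := hasFDerivAt_Hf a f η i ξ hξ hη hlt hda hf1 hf2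
  have heq2 : fderiv ℝ (fun ξ' => fderiv ℝ (fun η' => Fof a f ξ' η') η (e i)) ξ = L := by
    have hUopen : IsOpen {x : E3 | x ≠ 0 ∧ |⟪x, η⟫| < ‖x‖ * ‖η‖} := by
      apply IsOpen.inter isOpen_ne
      exact isOpen_lt
        (show Continuous fun x : E3 => |⟪x, η⟫| from
          continuous_abs.comp (continuous_id.inner continuous_const))
        (show Continuous fun x : E3 => ‖x‖ * ‖η‖ from continuous_norm.mul continuous_const)
    have hmemU : ξ ∈ {x : E3 | x ≠ 0 ∧ |⟪x, η⟫| < ‖x‖ * ‖η‖} := ⟨hξ, hlt⟩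
    have hev : (fun x => fderiv ℝ (fun η' => Fof a f x η') η (e i)) =ᶠ[nhds ξ] Hf a f η i := by
      filter_upwards [hUopen.mem_nhds hmemU] with x hx
      exact fderiv_F_right_apply a f x η hx.1 hη hx.2 (hfd _ (hmemIoo x hx.1 hx.2)) i
    rw [hev.fderiv_eq, hH.fderiv]
  rw [hT1, heq2]
  have hsum : ∑ j : Fin 3, η j * L (e j) = L η := by
    have hb := (EuclideanSpace.basisFun (Fin 3) ℝ).sum_repr η
    simp only [EuclideanSpace.basisFun_apply, EuclideanSpace.basisFun_repr] at hb
    calc ∑ j : Fin 3, η j * L (e j) = ∑ j : Fin 3, L (η j • e j) := by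
          refine Finset.sum_congr rfl fun j _ => ?_
          rw [ContinuousLinearMap.map_smul, smul_eq_mul]
        _ = L (∑ j : Fin 3, η j • e j) := (map_sum L _ _).symm
        _ = L η := by simp only [e]; rw [hb]
  rw [hsum, hLval η]
  -- scalar algebra
  have hcpos : 0 < Real.cos (psi ξ η) := cos_psi_pos ξ η hlt (mul_pos hnx hnw)
  have hu := abs_u_lt_one ξ η hlt (mul_pos hnx hnw)
  rw [abs_lt] at hu
  have hsin : Real.sin (psi ξ η) = ⟪ξ, η⟫ / (‖ξ‖ * ‖η‖) := by
    rw [psi, Real.sin_arcsin (le_of_lt hu.1) (le_of_lt hu.2)]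
  have hp : ⟪ξ, η⟫ = Real.sin (psi ξ η) * (‖ξ‖ * ‖η‖) := by
    rw [hsin]; field_simp
  have hηη : ⟪η, η⟫ = ‖η‖ ^ 2 := real_inner_self_eq_norm_sq η
  have heiη : ⟪e i, η⟫ = η i := by simp [e, EuclideanSpace.inner_single_left]
  have h2 : Real.cos (psi ξ η) ^ 2 = 1 - Real.sin (psi ξ η) ^ 2 := Real.cos_sq' (psi ξ η)
  rw [Real.tan_eq_sin_div_cos, hp, hηη, heiη]
  generalize Real.sin (psi ξ η) = Sn at h2 ⊢
  generalize Real.cos (psi ξ η) = C at h2 hcpos ⊢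
  generalize f (psi ξ η) = A1
  generalize deriv f (psi ξ η) = A2
  generalize deriv (deriv f) (psi ξ η) = A3
  generalize a ‖ξ‖ = A0
  generalize deriv a ‖ξ‖ = A0'
  generalize hXd : (ξ i : ℝ) = X
  generalize hWd : (η i : ℝ) = W
  have hC : C ≠ 0 := ne_of_gt hcpos
  have hr : ‖ξ‖ ≠ 0 := ne_of_gt hnx
  have hs : ‖η‖ ≠ 0 := ne_of_gt hnw
  linear_combination (norm := (field_simp; ring))
    (A0 * (Sn * A2 / C + A3) * (‖η‖ * X / ‖ξ‖ - Sn * W) / (‖ξ‖ * C ^ 2)) * h2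
end
end

section
/- Let λ > 0 and define f_λ : (−π/2, π/2) → ℝ by f_λ(ψ) = sin ψ · ∫₀^{ψ} (cos t)^{1/λ} dt + λ (cos ψ)^{1+1/λ}. Then f_λ solves the ODE f_λ''(ψ) + f_λ(ψ) = (cos ψ)^{(1−λ)/λ} for all ψ ∈ (−π/2, π/2). -/
open Real intervalIntegral

noncomputable section

/-- `f_λ(ψ) = sin ψ ∫₀^ψ (cos t)^{1/λ} dt + λ (cos ψ)^{1+1/λ}` -/
def fL (lam p : ℝ) : ℝ :=
  Real.sin p * (∫ t in (0:ℝ)..p, Real.cos t ^ (1 / lam)) + lam * Real.cos p ^ (1 + 1 / lam)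

/-- The terms `sin ψ (cos ψ)^{1/λ}` and `-(1 + λ) sin ψ (cos ψ)^{1/λ}` coming from the integral
and from `λ (cos ψ)^{1+1/λ}` combine into the second summand. -/
def fLDeriv (lam p : ℝ) : ℝ :=
  Real.cos p * (∫ t in (0:ℝ)..p, Real.cos t ^ (1 / lam)) -
    lam * Real.sin p * Real.cos p ^ (1 / lam)

theorem hasDerivAt_integral_cos_rpow {a : ℝ} (ha : 0 ≤ a) (p : ℝ) :
    HasDerivAt (fun u => ∫ t in (0:ℝ)..u, Real.cos t ^ a) (Real.cos p ^ a) p :=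
  ((continuous_cos.rpow_const fun _ => Or.inr ha).integral_hasStrictDerivAt 0 p).hasDerivAt

theorem hasDerivAt_fL {lam : ℝ} (hlam : 0 < lam) (p : ℝ) :
    HasDerivAt (fL lam) (fLDeriv lam p) p := by
  have hint := (hasDerivAt_sin p).mul
    (hasDerivAt_integral_cos_rpow (a := 1 / lam) (by positivity) p)
  have hpow := ((hasDerivAt_cos p).rpow_const
    (p := 1 + 1 / lam) (Or.inr (by simp [hlam.le]))).const_mul lam
  refine (hint.add hpow).congr_deriv ?_
  rw [add_sub_cancel_left, fLDeriv]
  field_simp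
  ring

theorem deriv_fL {lam : ℝ} (hlam : 0 < lam) : deriv (fL lam) = fLDeriv lam :=
  funext fun p => (hasDerivAt_fL hlam p).deriv

theorem hasDerivAt_fLDeriv {lam : ℝ} (hlam : 0 < lam) {p : ℝ} (hcos : Real.cos p ≠ 0) :
    HasDerivAt (fLDeriv lam) (Real.cos p ^ ((1 - lam) / lam) - fL lam p) p := by
  have hint := (hasDerivAt_cos p).mul
    (hasDerivAt_integral_cos_rpow (a := 1 / lam) (by positivity) p)
  have hpow := ((hasDerivAt_sin p).const_mul lam).mul
    ((hasDerivAt_cos p).rpow_const (p := 1 / lam) (Or.inl hcos))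
  refine (hint.sub hpow).congr_deriv ?_
  have hexp : (1 - lam) / lam = 1 / lam - 1 := by field_simp
  rw [fL, hexp]
  -- express every power of `cos p` through `A = (cos p)^{1/λ - 1}`
  set A := Real.cos p ^ (1 / lam - 1)
  have h₁ : Real.cos p ^ (1 / lam) = A * Real.cos p := by
    rw [← rpow_add_one hcos, sub_add_cancel]
  have h₂ : Real.cos p ^ (1 + 1 / lam) = A * Real.cos p * Real.cos p := by
    rw [← h₁, ← rpow_add_one hcos, add_comm]
  rw [h₁, h₂]
  field_simp
  linear_combination A * sin_sq_add_cos_sq p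

theorem stmt15 (lam : ℝ) (hlam : 0 < lam) :
    ∀ p ∈ Set.Ioo (-(π / 2)) (π / 2),
      deriv (deriv (fL lam)) p + fL lam p = Real.cos p ^ ((1 - lam) / lam) := by
  intro p hp
  rw [deriv_fL hlam, (hasDerivAt_fLDeriv hlam (cos_pos_of_mem_Ioo hp).ne').deriv]
  ring
end
end
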